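/- Let F_1 = F_2 = 1, F_{n+2} = F_{n+1} + F_n be the Fibonacci numbers. For n ≥ 6, consider the n-dimensional anticommutative complex algebra A with basis e_1, ..., e_n whose only nonzero products (up to antisymmetry) include e_i e_{i+1} = e_{i+2} for 1 ≤ i ≤ n-2, and whose structure constants satisfy c_{ij}^k = 0 for k ≤ max(i,j). Assign weights w(e_1) = w(e_2) = 1 and require that A is graded so that w(e_{i+2}) = w(e_i) + w(e_{i+1}); then w(e_i) = F_i, and any product of more than F_n elements of A vanishes, i.e., the nilpotency index of A is at most F_n + 1. -/
import Mathlib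


/-- `algPow mul k` is the submodule `N^{k+1}` of the algebra `(M, mul)`, where
`N^1 = N` and `N^{k+1} = ∑_{i=1}^{k} N^i N^{k+1-i}`. -/
def algPow {M : Type*} [AddCommGroup M] [Module ℂ M] (mul : M → M → M) : ℕ → Submodule ℂ M
  | 0 => ⊤
  | (k+1) => ⨆ i : Fin (k+1), Submodule.span ℂ
      (Set.image2 mul (algPow mul i.val : Set M) (algPow mul (k - i.val) : Set M))
  termination_by k => k
  decreasing_by
  · exact i.isLt
  · exact Nat.lt_succ_of_le (Nat.sub_le k i.val)

/-- The multiplication on `Fin n → ℂ` determined by structure constants `c`. -/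
noncomputable def mulC {n : ℕ} (c : Fin n → Fin n → Fin n → ℂ) (v w : Fin n → ℂ) : Fin n → ℂ :=
  fun k => ∑ i, ∑ j, v i * w j * c i j k


/-- Weight filtration: vectors supported on basis indices of Fibonacci weight `≥ m`. -/
noncomputable def wtS (n m : ℕ) : Submodule ℂ (Fin n → ℂ) where
  carrier := {v | ∀ k : Fin n, Nat.fib (k.val + 1) < m → v k = 0}
  add_mem' := by intro a b ha hb k hk; simp [ha k hk, hb k hk]
  zero_mem' := by intro k hk; rfl
  smul_mem' := by intro r v hv k hk; simp [hv k hk]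

lemma mulC_mem_wtS {n : ℕ} (c : Fin n → Fin n → Fin n → ℂ)
    (hfib : ∀ i j k : Fin n, c i j k ≠ 0 →
      Nat.fib (i.val + 1) + Nat.fib (j.val + 1) ≤ Nat.fib (k.val + 1))
    {a b : ℕ} {v w : Fin n → ℂ} (hv : v ∈ wtS n a) (hw : w ∈ wtS n b) :
    mulC c v w ∈ wtS n (a + b) := by
  intro k hk
  apply Finset.sum_eq_zero
  intro i _
  apply Finset.sum_eq_zero
  intro j _
  by_cases hci : c i j k = 0
  · simp [hci]
  by_cases hvi : v i = 0
  · simp [hvi]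
  by_cases hwj : w j = 0
  · simp [hwj]
  exfalso
  have h1 : a ≤ Nat.fib (i.val + 1) := by
    by_contra h; exact hvi (hv i (by omega))
  have h2 : b ≤ Nat.fib (j.val + 1) := by
    by_contra h; exact hwj (hw j (by omega))
  have := hfib i j k hci
  omega

lemma algPow_le_wtS {n : ℕ} (c : Fin n → Fin n → Fin n → ℂ)
    (hfib : ∀ i j k : Fin n, c i j k ≠ 0 →
      Nat.fib (i.val + 1) + Nat.fib (j.val + 1) ≤ Nat.fib (k.val + 1)) :
    ∀ m, algPow (mulC c) m ≤ wtS n (m + 1) := by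
  intro m
  induction m using Nat.strong_induction_on with
  | _ m ih =>
    match m with
    | 0 =>
      intro v _ k hk
      have : 0 < Nat.fib (k.val + 1) := Nat.fib_pos.mpr (Nat.succ_pos _)
      omega
    | (k+1) =>
      rw [algPow]
      apply iSup_le
      intro i
      rw [Submodule.span_le]
      rintro x ⟨y, hy, z, hz, rfl⟩
      have hy' : y ∈ wtS n (i.val + 1) := ih i.val i.isLt hy
      have hz' : z ∈ wtS n (k - i.val + 1) :=
        ih (k - i.val) (Nat.lt_succ_of_le (Nat.sub_le k i.val)) hz
      have := mulC_mem_wtS c hfib hy' hz'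
      have he : i.val + 1 + (k - i.val + 1) = k + 1 + 1 := by
        have := i.isLt; omega
      rwa [he] at this

/-- Fibonacci bound for the nilpotency index. Let `A` be an `n`-dimensional (`n ≥ 6`)
anticommutative complex algebra with basis `e_1, …, e_n`, structure constants vanishing
for `k ≤ max(i,j)`, nonzero products including `e_i e_{i+1} = e_{i+2}`, and suppose the
Fibonacci grading condition holds: every nonzero structure constant `c_{ij}^k` satisfies
`F_i + F_j ≤ F_k` (so `e_i` has weight `F_i`). Then every product of more than `F_n`
elements vanishes: `A^{F_n + 1} = 0`. -/
theorem nilpotency_index_le_fib {n : ℕ} (hn : 6 ≤ n)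
    (c : Fin n → Fin n → Fin n → ℂ)
    (hanti : ∀ i j k : Fin n, c i j k = -c j i k)
    (hc : ∀ i j k : Fin n, k.val ≤ max i.val j.val → c i j k = 0)
    (hchain : ∀ i : ℕ, (h : i + 2 < n) →
      mulC c (Pi.single (⟨i, by omega⟩ : Fin n) (1 : ℂ))
        (Pi.single (⟨i + 1, by omega⟩ : Fin n) (1 : ℂ)) =
      Pi.single (⟨i + 2, by omega⟩ : Fin n) (1 : ℂ))
    (hfib : ∀ i j k : Fin n, c i j k ≠ 0 →
      Nat.fib (i.val + 1) + Nat.fib (j.val + 1) ≤ Nat.fib (k.val + 1)) :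
    algPow (mulC c) (Nat.fib n) = ⊥ := by
  apply le_antisymm _ bot_le
  intro v hv
  have h1 := algPow_le_wtS c hfib (Nat.fib n) hv
  have : v = 0 := by
    funext k
    exact h1 k (by
      have : Nat.fib (k.val + 1) ≤ Nat.fib n := Nat.fib_mono (by omega)
      omega)
  simp [this]
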